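/- arXiv:2504.04069 — 2 statements merged into one kernel-verified Lean document; each statement's English description precedes it below -/
import Mathlib

section
/- Let P, Q ⊆ ℝ^n be the polyhedral cones generated by the matrices G ∈ ℝ^{n×p} and H ∈ ℝ^{n×q} with unit-norm columns, and assume Q ⊆ P*, where P* is the dual cone of P. Then min{⟨u,v⟩ : u ∈ P, ‖u‖ = 1, v ∈ Q, ‖v‖ = 1} = min_{i,j} ⟨g_i, h_j⟩, this minimum is attained at a pair of generator columns (g_i, h_j), and the minimum value is nonnegative (so the maximal angle between P and Q lies in [0, π/2]). -/
open Matrix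

/-- Euclidean norm of a vector in `ℝ^n`. -/
noncomputable def vnorm {n : ℕ} (v : Fin n → ℝ) : ℝ := Real.sqrt (v ⬝ᵥ v)

/-- The polyhedral cone generated by the columns of `G`. -/
def coneOf {m p : ℕ} (G : Matrix (Fin m) (Fin p) ℝ) : Set (Fin m → ℝ) :=
  {u | ∃ x : Fin p → ℝ, (∀ i, 0 ≤ x i) ∧ u = G.mulVec x}

/-!
Write `u = G x`, `v = H y` with `x, y ≥ 0`. Then `⟨u, v⟩ = xᵀ (Gᵀ H) y ≥ m (∑ xᵢ) (∑ yⱼ)`, where `m`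
is the least entry of `Gᵀ H`; `m ≥ 0` because the generator columns themselves lie in `P` and
`Q ⊆ P*`. Since the columns are unit vectors, the triangle inequality gives
`1 = ‖u‖ ≤ ∑ xᵢ` and likewise `1 ≤ ∑ yⱼ`, so `⟨u, v⟩ ≥ m`, and `m` is attained by two columns.
-/

lemma vnorm_eq_norm_toLp {n : ℕ} (v : Fin n → ℝ) : vnorm v = ‖WithLp.toLp 2 v‖ := by
  rw [vnorm, EuclideanSpace.norm_eq]
  simp [dotProduct, sq]

lemma col_mem_coneOf {n p : ℕ} (G : Matrix (Fin n) (Fin p) ℝ) (i : Fin p) :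
    (fun k => G k i) ∈ coneOf G :=
  ⟨Pi.single i 1, (Pi.single_nonneg.2 zero_le_one : (0 : Fin p → ℝ) ≤ Pi.single i 1),
    by ext k; simp [mulVec_single]⟩

lemma col_dotProduct_col {n p q : ℕ} (G : Matrix (Fin n) (Fin p) ℝ)
    (H : Matrix (Fin n) (Fin q) ℝ) (i : Fin p) (j : Fin q) :
    (fun k => G k i) ⬝ᵥ (fun k => H k j) = (Gᵀ * H) i j :=
  rfl

lemma vnorm_mulVec_le_sum {n p : ℕ} {G : Matrix (Fin n) (Fin p) ℝ}
    (hG : ∀ j, vnorm (fun i => G i j) = 1) {x : Fin p → ℝ} (hx : ∀ i, 0 ≤ x i) :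
    vnorm (G *ᵥ x) ≤ ∑ i, x i := by
  have hsum : WithLp.toLp 2 (G *ᵥ x) = ∑ i, x i • WithLp.toLp 2 (fun k => G k i) := by
    ext k
    simp [mulVec, dotProduct, mul_comm]
  rw [vnorm_eq_norm_toLp, hsum]
  refine (norm_sum_le _ _).trans_eq (Finset.sum_congr rfl fun i _ => ?_)
  rw [norm_smul, ← vnorm_eq_norm_toLp, hG, mul_one, Real.norm_of_nonneg (hx i)]

lemma mulVec_dotProduct_mulVec {n p q : ℕ} (G : Matrix (Fin n) (Fin p) ℝ)
    (H : Matrix (Fin n) (Fin q) ℝ) (x : Fin p → ℝ) (y : Fin q → ℝ) :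
    (G *ᵥ x) ⬝ᵥ (H *ᵥ y) = x ⬝ᵥ ((Gᵀ * H) *ᵥ y) := by
  rw [dotProduct_mulVec, dotProduct_mulVec, ← vecMul_vecMul, vecMul_transpose]

lemma mul_sum_mul_sum_le_dotProduct_mulVec {p q : ℕ} {A : Matrix (Fin p) (Fin q) ℝ} {m : ℝ}
    (hm : ∀ i j, m ≤ A i j) {x : Fin p → ℝ} (hx : ∀ i, 0 ≤ x i) {y : Fin q → ℝ}
    (hy : ∀ j, 0 ≤ y j) :
    m * ((∑ i, x i) * ∑ j, y j) ≤ x ⬝ᵥ (A *ᵥ y) := by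
  calc m * ((∑ i, x i) * ∑ j, y j) = ∑ i, ∑ j, m * (x i * y j) := by
        rw [Finset.sum_mul_sum, Finset.mul_sum]
        simp only [Finset.mul_sum]
    _ ≤ ∑ i, ∑ j, x i * (A i j * y j) :=
        Finset.sum_le_sum fun i _ => Finset.sum_le_sum fun j _ => by
          nlinarith [hm i j, mul_nonneg (hx i) (hy j)]
    _ = x ⬝ᵥ (A *ᵥ y) := by simp only [dotProduct, mulVec, Finset.mul_sum]

/-- If `Q ⊆ P*` (dual cone), then the minimum of `⟨u,v⟩` over unit vectors `u ∈ P`,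
`v ∈ Q` equals the minimum entry of `Gᵀ H`, is attained at a pair of generator columns,
and is nonnegative. -/
theorem stmt5 {n p q : ℕ} (hp : 0 < p) (hq : 0 < q)
    (G : Matrix (Fin n) (Fin p) ℝ) (H : Matrix (Fin n) (Fin q) ℝ)
    (hG : ∀ j, vnorm (fun i => G i j) = 1) (hH : ∀ j, vnorm (fun i => H i j) = 1)
    (hdual : ∀ w ∈ coneOf H, ∀ x ∈ coneOf G, 0 ≤ w ⬝ᵥ x) :
    ∃ (i : Fin p) (j : Fin q),
      (∀ i' j', (Gᵀ * H) i j ≤ (Gᵀ * H) i' j') ∧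
      (fun k => G k i) ⬝ᵥ (fun k => H k j) = (Gᵀ * H) i j ∧
      0 ≤ (Gᵀ * H) i j ∧
      (fun k => G k i) ∈ coneOf G ∧ vnorm (fun k => G k i) = 1 ∧
      (fun k => H k j) ∈ coneOf H ∧ vnorm (fun k => H k j) = 1 ∧
      ∀ u ∈ coneOf G, ∀ v ∈ coneOf H, vnorm u = 1 → vnorm v = 1 →
        (fun k => G k i) ⬝ᵥ (fun k => H k j) ≤ u ⬝ᵥ v := by
  have : Nonempty (Fin p × Fin q) := ⟨(⟨0, hp⟩, ⟨0, hq⟩)⟩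
  obtain ⟨⟨i, j⟩, hmin⟩ := Finite.exists_min fun ij : Fin p × Fin q => (Gᵀ * H) ij.1 ij.2
  have hleast : ∀ i' j', (Gᵀ * H) i j ≤ (Gᵀ * H) i' j' := fun i' j' => hmin (i', j')
  have hnonneg : 0 ≤ (Gᵀ * H) i j := by
    rw [← col_dotProduct_col, dotProduct_comm]
    exact hdual _ (col_mem_coneOf H j) _ (col_mem_coneOf G i)
  refine ⟨i, j, hleast, col_dotProduct_col G H i j, hnonneg, col_mem_coneOf G i, hG i,
    col_mem_coneOf H j, hH j, ?_⟩
  rintro u ⟨x, hx, rfl⟩ v ⟨y, hy, rfl⟩ hu hv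
  have hsum : 1 ≤ (∑ i, x i) * ∑ j, y j :=
    one_le_mul_of_one_le_of_one_le (hu ▸ vnorm_mulVec_le_sum hG hx)
      (hv ▸ vnorm_mulVec_le_sum hH hy)
  calc (fun k => G k i) ⬝ᵥ (fun k => H k j) = (Gᵀ * H) i j := col_dotProduct_col G H i j
    _ ≤ (Gᵀ * H) i j * ((∑ i, x i) * ∑ j, y j) := le_mul_of_one_le_right hnonneg hsum
    _ ≤ x ⬝ᵥ ((Gᵀ * H) *ᵥ y) := mul_sum_mul_sum_le_dotProduct_mulVec hleast hx hy
    _ = (G *ᵥ x) ⬝ᵥ (H *ᵥ y) := (mulVec_dotProduct_mulVec G H x y).symm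
end

section
/- Let P, Q ⊆ ℝ^n be polyhedral cones and let (u,v) be a critical pair of MA(P,Q). Let F_u and F_v be the faces of P and Q of least dimension containing u and v respectively. If dim(F_u) + dim(F_v) > n and v ≠ u and v ≠ −u, then (u,v) is a saddle point of MA(P,Q), i.e. (u,v) is neither a local minimizer nor a local maximizer of (u,v) ↦ ⟨u,v⟩ on the feasible set {(u,v) : u ∈ P, v ∈ Q, ‖u‖ = ‖v‖ = 1}. -/
open Matrix

/-- `F` is a face of the cone `P`: a subcone `F ⊆ P` such that whenever a sum of two
elements of `P` lies in `F`, both summands lie in `F`. -/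
def IsFace {d : ℕ} (P F : Set (Fin d → ℝ)) : Prop :=
  F ⊆ P ∧ Convex ℝ F ∧ (∀ c : ℝ, 0 ≤ c → ∀ x ∈ F, c • x ∈ F) ∧
    ∀ v₁ v₂, v₁ ∈ P → v₂ ∈ P → v₁ + v₂ ∈ F → v₁ ∈ F ∧ v₂ ∈ F

/-- The dimension of a face: the dimension of its linear span. -/
noncomputable def faceDim {d : ℕ} (F : Set (Fin d → ℝ)) : ℕ :=
  Module.finrank ℝ ↥(Submodule.span ℝ F)

/-!
For a convex cone `C ∋ u`, the directions `z` with `u + t • z ∈ C` for all small `|t|` form a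
subspace, and it contains the span of the smallest face through `u`. Since
`dim F_u + dim F_v > n`, some `z ≠ 0` is such a direction both for `u ∈ P` and for `v ∈ Q`.
The criticality conditions, tested along `u ± t • z` and `v ± t • z`, force
`(v - σ u) ⊥ z` and `(u - σ v) ⊥ z`; as `|σ| < 1` this gives `z ⊥ u` and `z ⊥ v`. Normalising
`u + t • z` and `v ± t • z` then yields feasible pairs arbitrarily close to `(u, v)` with value
`(σ ± t² ‖z‖²) / (1 + t² ‖z‖²)`, which is above `σ` for `+` and below it for `-`.
-/

open Filter Topology

theorem Submodule.exists_mem_inf_ne_zero_of_finrank_lt_add {K V : Type*} [DivisionRing K]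
    [AddCommGroup V] [Module K V] [FiniteDimensional K V] {s t : Submodule K V}
    (h : Module.finrank K V < Module.finrank K s + Module.finrank K t) :
    ∃ z ∈ s ⊓ t, z ≠ 0 := by
  by_contra! hst
  exact h.not_ge (Submodule.finrank_add_finrank_le_of_disjoint
    (Submodule.disjoint_def.2 fun z hs ht => hst z ⟨hs, ht⟩))

theorem coneOf_eq_map {m p : ℕ} (G : Matrix (Fin m) (Fin p) ℝ) :
    coneOf G = (PointedCone.positive ℝ (Fin p → ℝ)).map G.mulVecLin := by
  ext u
  simp only [coneOf, PointedCone.coe_map, Set.mem_ofPred_eq, Set.mem_image, SetLike.mem_coe,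
    PointedCone.mem_positive, mulVecLin_apply, Pi.le_def, Pi.zero_apply, eq_comm]

theorem exists_pointedCone_coe_eq_of_coneOf {n : ℕ} {P : Set (Fin n → ℝ)}
    (hP : ∃ (p : ℕ) (G : Matrix (Fin n) (Fin p) ℝ), P = coneOf G) :
    ∃ C : PointedCone ℝ (Fin n → ℝ), (C : Set (Fin n → ℝ)) = P :=
  let ⟨_, G, hG⟩ := hP
  ⟨_, (hG.trans (coneOf_eq_map G)).symm⟩

theorem IsFace.inter {d : ℕ} {P F F' : Set (Fin d → ℝ)} (hF : IsFace P F) (hF' : IsFace P F') :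
    IsFace P (F ∩ F') := by
  obtain ⟨hFP, hFconv, hFsmul, hFface⟩ := hF
  obtain ⟨-, hF'conv, hF'smul, hF'face⟩ := hF'
  refine ⟨Set.inter_subset_left.trans hFP, hFconv.inter hF'conv,
    fun c hc x hx => ⟨hFsmul c hc x hx.1, hF'smul c hc x hx.2⟩, fun v₁ v₂ h₁ h₂ h => ?_⟩
  obtain ⟨hv₁F, hv₂F⟩ := hFface v₁ v₂ h₁ h₂ h.1
  obtain ⟨hv₁F', hv₂F'⟩ := hF'face v₁ v₂ h₁ h₂ h.2
  exact ⟨⟨hv₁F, hv₁F'⟩, ⟨hv₂F, hv₂F'⟩⟩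

namespace Convex

variable {E : Type*} [AddCommGroup E] [Module ℝ E] {C : Set E} {u : E}

/-- For a convex cone `C`, this is the linear span of the smallest face of `C` containing `u`. -/
def lineDirections (hC : Convex ℝ C) (hu : u ∈ C) : Submodule ℝ E where
  carrier := {z | ∀ᶠ t in 𝓝 (0 : ℝ), u + t • z ∈ C}
  zero_mem' := by simp [hu]
  add_mem' := by
    intro z w hz hw
    have h2 : Tendsto (fun t : ℝ => 2 * t) (𝓝 0) (𝓝 0) := by
      simpa using (tendsto_id (x := 𝓝 (0 : ℝ))).const_mul 2
    filter_upwards [h2.eventually hz, h2.eventually hw] with t hzt hwt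
    have hmid : u + t • (z + w) =
        (1 / 2 : ℝ) • (u + (2 * t) • z) + (1 / 2 : ℝ) • (u + (2 * t) • w) := by
      module
    rw [hmid]
    exact hC hzt hwt (by norm_num) (by norm_num) (by norm_num)
  smul_mem' := by
    intro c z hz
    have hc : Tendsto (fun t : ℝ => t * c) (𝓝 0) (𝓝 0) := by
      simpa using (tendsto_id (x := 𝓝 (0 : ℝ))).mul_const c
    filter_upwards [hc.eventually hz] with t ht
    simpa [smul_smul] using ht

theorem apply_eq_zero_of_mem_lineDirections (hC : Convex ℝ C) (hu : u ∈ C) {f : E →ₗ[ℝ] ℝ}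
    (hf : ∀ x ∈ C, 0 ≤ f x) (hfu : f u = 0) {z : E} (hz : z ∈ hC.lineDirections hu) :
    f z = 0 := by
  have hmin : IsLocalMin (fun t : ℝ => t * f z) 0 := by
    filter_upwards [hz] with t ht
    simpa [hfu] using hf _ ht
  exact hmin.hasDerivAt_eq_zero (hasDerivAt_mul_const _)

end Convex

namespace PointedCone

variable {n : ℕ} {C : PointedCone ℝ (Fin n → ℝ)} {u : Fin n → ℝ}

theorem self_mem_lineDirections (hu : u ∈ C) : u ∈ C.convex.lineDirections hu := by
  filter_upwards [Ioi_mem_nhds (show (-1 : ℝ) < 0 by norm_num)] with t ht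
  rw [show u + t • u = (1 + t) • u by module]
  exact C.smul_mem (by linarith [Set.mem_Ioi.1 ht]) hu

theorem isFace_inter_lineDirections (hu : u ∈ C) :
    IsFace C ((C : Set (Fin n → ℝ)) ∩ C.convex.lineDirections hu) := by
  have hface : ∀ {x y}, x ∈ C → y ∈ C → x + y ∈ C.convex.lineDirections hu →
      x ∈ C.convex.lineDirections hu := by
    intro x y hx hy hxy
    filter_upwards [hxy] with t ht
    rcases le_total 0 t with ht0 | ht0
    · exact C.add_mem hu (C.smul_mem ht0 hx)
    · have hsplit : u + t • x = (u + t • (x + y)) + (-t) • y := by module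
      rw [hsplit]
      exact C.add_mem ht (C.smul_mem (neg_nonneg.2 ht0) hy)
  refine ⟨Set.inter_subset_left, C.convex.inter (Submodule.convex _),
    fun c hc x hx => ⟨C.smul_mem hc hx.1, Submodule.smul_mem _ c hx.2⟩,
    fun v₁ v₂ h₁ h₂ h => ⟨⟨h₁, hface h₁ h₂ h.2⟩, ⟨h₂, hface h₂ h₁ (add_comm v₁ v₂ ▸ h.2)⟩⟩⟩

theorem span_le_lineDirections_of_minimal {F : Set (Fin n → ℝ)} (hu : u ∈ C)
    (hF : IsFace C F) (huF : u ∈ F) (hmin : ∀ F', IsFace C F' → u ∈ F' → faceDim F ≤ faceDim F') :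
    Submodule.span ℝ F ≤ C.convex.lineDirections hu := by
  have hspan : Submodule.span ℝ (F ∩ (C ∩ C.convex.lineDirections hu)) = Submodule.span ℝ F :=
    Submodule.eq_of_le_of_finrank_le (Submodule.span_mono Set.inter_subset_left)
      (hmin _ (hF.inter (isFace_inter_lineDirections hu)) ⟨huF, hu, self_mem_lineDirections hu⟩)
  rw [← hspan]
  exact Submodule.span_le.2 fun x hx => hx.2.2

end PointedCone

section UnitVectors

variable {n : ℕ} {u v z : Fin n → ℝ}

theorem vnorm_sq (x : Fin n → ℝ) : vnorm x ^ 2 = x ⬝ᵥ x :=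
  Real.sq_sqrt (by simpa using dotProduct_star_self_nonneg x)

theorem vnorm_pos {x : Fin n → ℝ} (hx : x ≠ 0) : 0 < vnorm x :=
  Real.sqrt_pos.2 (by simpa using dotProduct_star_self_pos_iff.2 hx)

theorem continuous_vnorm : Continuous (vnorm : (Fin n → ℝ) → ℝ) :=
  Real.continuous_sqrt.comp (continuous_id.dotProduct continuous_id)

theorem vnorm_zero : vnorm (0 : Fin n → ℝ) = 0 := by simp [vnorm]

noncomputable def vnormalize (x : Fin n → ℝ) : Fin n → ℝ := (vnorm x)⁻¹ • x

theorem vnorm_vnormalize {x : Fin n → ℝ} (hx : x ≠ 0) : vnorm (vnormalize x) = 1 := by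
  have hpos := vnorm_pos hx
  rw [vnorm, vnormalize, smul_dotProduct, dotProduct_smul, ← vnorm_sq, smul_eq_mul, smul_eq_mul,
    ← mul_assoc, ← sq, ← mul_pow, inv_mul_cancel₀ hpos.ne', one_pow, Real.sqrt_one]

theorem vnormalize_dotProduct_vnormalize (x y : Fin n → ℝ) :
    vnormalize x ⬝ᵥ vnormalize y = x ⬝ᵥ y / (vnorm x * vnorm y) := by
  simp only [vnormalize, smul_dotProduct, dotProduct_smul, smul_eq_mul]
  field_simp

theorem vnormalize_of_vnorm_eq_one {x : Fin n → ℝ} (hx : vnorm x = 1) : vnormalize x = x := by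
  simp [vnormalize, hx]

theorem eventually_vnorm_vnormalize_sub_lt {α : Type*} {l : Filter α} {f : α → Fin n → ℝ}
    {x : Fin n → ℝ} (hx : vnorm x = 1) (hf : Tendsto f l (𝓝 x)) {ε : ℝ} (hε : 0 < ε) :
    ∀ᶠ a in l, vnorm (vnormalize (f a) - x) < ε := by
  have hx0 : x ≠ 0 := by rintro rfl; simp [vnorm_zero] at hx
  have hcont : ContinuousAt vnormalize x :=
    (continuous_vnorm.continuousAt.inv₀ (vnorm_pos hx0).ne').smul continuousAt_id
  have hlim := hcont.tendsto.comp hf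
  rw [vnormalize_of_vnorm_eq_one hx] at hlim
  have hsub := hlim.sub_const x
  rw [sub_self] at hsub
  have hdist := (continuous_vnorm.tendsto 0).comp hsub
  rw [vnorm_zero] at hdist
  exact hdist.eventually (gt_mem_nhds hε)


theorem dotProduct_self_eq_one (hu : vnorm u = 1) : u ⬝ᵥ u = 1 := by
  rw [← vnorm_sq, hu, one_pow]

theorem dotProduct_lt_one_of_ne (hu : u ⬝ᵥ u = 1) (hv : v ⬝ᵥ v = 1) (h : v ≠ u) :
    u ⬝ᵥ v < 1 := by
  have hpos : 0 < (u - v) ⬝ᵥ (u - v) := by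
    simpa using dotProduct_star_self_pos_iff.2 (sub_ne_zero.2 h.symm)
  have hexp : (u - v) ⬝ᵥ (u - v) = 2 - 2 * (u ⬝ᵥ v) := by
    rw [sub_dotProduct, dotProduct_sub, dotProduct_sub, hu, hv, dotProduct_comm v u]
    ring
  linarith

theorem dotProduct_eq_zero_of_sub_smul_dotProduct_eq_zero (hσ : (u ⬝ᵥ v) ^ 2 < 1)
    (hv : (v - (u ⬝ᵥ v) • u) ⬝ᵥ z = 0) (hu : (u - (u ⬝ᵥ v) • v) ⬝ᵥ z = 0) :
    u ⬝ᵥ z = 0 ∧ v ⬝ᵥ z = 0 := by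
  simp only [sub_dotProduct, smul_dotProduct, smul_eq_mul] at hv hu
  have h : (1 - (u ⬝ᵥ v) ^ 2) * (u ⬝ᵥ z) = 0 := by linear_combination hu + (u ⬝ᵥ v) * hv
  have huz : u ⬝ᵥ z = 0 := (mul_eq_zero.1 h).resolve_left (by linarith)
  exact ⟨huz, by linear_combination hv + (u ⬝ᵥ v) * huz⟩

theorem dotProduct_add_smul_self (huz : u ⬝ᵥ z = 0) (t : ℝ) :
    (u + t • z) ⬝ᵥ (u + t • z) = u ⬝ᵥ u + t ^ 2 * (z ⬝ᵥ z) := by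
  simp only [dotProduct_add, add_dotProduct, dotProduct_smul, smul_dotProduct, smul_eq_mul, huz,
    dotProduct_comm z u]
  ring

theorem add_smul_ne_zero (hu : u ⬝ᵥ u = 1) (huz : u ⬝ᵥ z = 0) (t : ℝ) : u + t • z ≠ 0 := by
  intro h
  have h' := congrArg (· ⬝ᵥ u) h
  simp [add_dotProduct, hu, dotProduct_comm z u, huz] at h'

theorem sign_mul_vnormalize_dotProduct_sub_pos (hu : u ⬝ᵥ u = 1) (hv : v ⬝ᵥ v = 1)
    (huz : u ⬝ᵥ z = 0) (hvz : v ⬝ᵥ z = 0) (hz : z ≠ 0) {s : ℝ} (hs : s ^ 2 = 1)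
    (hsσ : s * (u ⬝ᵥ v) < 1) {t : ℝ} (ht : t ≠ 0) :
    0 < s * (vnormalize (u + t • z) ⬝ᵥ vnormalize (v + (s * t) • z) - u ⬝ᵥ v) := by
  set x := t ^ 2 * (z ⬝ᵥ z)
  have hx : 0 < x :=
    mul_pos (sq_pos_of_ne_zero ht) (by simpa using dotProduct_star_self_pos_iff.2 hz)
  have hduu : (u + t • z) ⬝ᵥ (u + t • z) = 1 + x := by rw [dotProduct_add_smul_self huz, hu]
  have hdvv : (v + (s * t) • z) ⬝ᵥ (v + (s * t) • z) = 1 + x := by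
    rw [dotProduct_add_smul_self hvz, hv, mul_pow, hs, one_mul]
  have hduv : (u + t • z) ⬝ᵥ (v + (s * t) • z) = u ⬝ᵥ v + s * x := by
    simp only [dotProduct_add, add_dotProduct, dotProduct_smul, smul_dotProduct, smul_eq_mul, huz,
      dotProduct_comm z v, hvz]
    ring
  have hnorms : vnorm (u + t • z) * vnorm (v + (s * t) • z) = 1 + x := by
    rw [vnorm, vnorm, hduu, hdvv, Real.mul_self_sqrt (by positivity)]
  rw [vnormalize_dotProduct_vnormalize, hduv, hnorms]
  have hgain : s * ((u ⬝ᵥ v + s * x) / (1 + x) - u ⬝ᵥ v) = x * (1 - s * (u ⬝ᵥ v)) / (1 + x) := by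
    field_simp
    linear_combination x * hs
  rw [hgain]
  exact div_pos (mul_pos hx (by linarith)) (by linarith)

theorem exists_near_sign_mul_dotProduct_sub_pos {P Q : PointedCone ℝ (Fin n → ℝ)}
    (hu : vnorm u = 1) (hv : vnorm v = 1) (huz : u ⬝ᵥ z = 0) (hvz : v ⬝ᵥ z = 0) (hz : z ≠ 0)
    (hPz : ∀ᶠ t in 𝓝 (0 : ℝ), u + t • z ∈ P)
    (hQz : ∀ᶠ t in 𝓝 (0 : ℝ), v + t • z ∈ Q) {s : ℝ} (hs : s ^ 2 = 1)
    (hsσ : s * (u ⬝ᵥ v) < 1) {ε : ℝ} (hε : 0 < ε) :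
    ∃ u' ∈ P, ∃ v' ∈ Q, vnorm u' = 1 ∧ vnorm v' = 1 ∧ vnorm (u' - u) < ε ∧
      vnorm (v' - v) < ε ∧ 0 < s * (u' ⬝ᵥ v' - u ⬝ᵥ v) := by
  have huu := dotProduct_self_eq_one hu
  have hvv := dotProduct_self_eq_one hv
  have hst : Tendsto (fun t : ℝ => s * t) (𝓝 0) (𝓝 0) := by
    simpa using (tendsto_id (x := 𝓝 (0 : ℝ))).const_mul s
  have hcurve (w : Fin n → ℝ) (c : ℝ) : Tendsto (fun t : ℝ => w + (c * t) • z) (𝓝 0) (𝓝 w) :=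
    (by fun_prop : Continuous fun t : ℝ => w + (c * t) • z).tendsto' 0 w (by simp)
  obtain ⟨t, ⟨⟨⟨hPt, hQt⟩, hut, hvt⟩, ht⟩⟩ :=
    (((hPz.and (hst.eventually hQz)).and
      ((eventually_vnorm_vnormalize_sub_lt hu (by simpa using hcurve u 1) hε).and
        (eventually_vnorm_vnormalize_sub_lt hv (hcurve v s) hε))).filter_mono
      nhdsWithin_le_nhds |>.and self_mem_nhdsWithin).exists (f := 𝓝[≠] (0 : ℝ))
  exact ⟨_, P.smul_mem (inv_nonneg.2 (Real.sqrt_nonneg _)) hPt,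
    _, Q.smul_mem (inv_nonneg.2 (Real.sqrt_nonneg _)) hQt,
    vnorm_vnormalize (add_smul_ne_zero huu huz t),
    vnorm_vnormalize (add_smul_ne_zero hvv hvz (s * t)), hut, hvt,
    sign_mul_vnormalize_dotProduct_sub_pos huu hvv huz hvz hz hs hsσ ht⟩

end UnitVectors

/-- If `(u,v)` is a critical pair of `MA(P,Q)` for polyhedral cones `P, Q ⊆ ℝⁿ`, the
least-dimensional faces `F_u ∋ u`, `F_v ∋ v` satisfy `dim F_u + dim F_v > n`, and
`v ≠ ±u`, then `(u,v)` is a saddle point: neither a local minimizer nor a local maximizer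
of `⟨u,v⟩` on the feasible set. -/
theorem stmt7 {n : ℕ} (P Q : Set (Fin n → ℝ))
    (hP : ∃ (p : ℕ) (G : Matrix (Fin n) (Fin p) ℝ), P = coneOf G)
    (hQ : ∃ (q : ℕ) (H : Matrix (Fin n) (Fin q) ℝ), Q = coneOf H)
    (u v : Fin n → ℝ)
    (hu : u ∈ P) (hv : v ∈ Q) (hnu : vnorm u = 1) (hnv : vnorm v = 1)
    (hcrit1 : ∀ w ∈ P, 0 ≤ (v - (u ⬝ᵥ v) • u) ⬝ᵥ w)
    (hcrit2 : ∀ w ∈ Q, 0 ≤ (u - (u ⬝ᵥ v) • v) ⬝ᵥ w)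
    (hcrit3 : u ⬝ᵥ (v - (u ⬝ᵥ v) • u) = 0)
    (hcrit4 : v ⬝ᵥ (u - (u ⬝ᵥ v) • v) = 0)
    (Fu Fv : Set (Fin n → ℝ))
    (hFu : IsFace P Fu) (huFu : u ∈ Fu)
    (hFumin : ∀ F, IsFace P F → u ∈ F → faceDim Fu ≤ faceDim F)
    (hFv : IsFace Q Fv) (hvFv : v ∈ Fv)
    (hFvmin : ∀ F, IsFace Q F → v ∈ F → faceDim Fv ≤ faceDim F)
    (hdim : n < faceDim Fu + faceDim Fv)
    (hne1 : v ≠ u) (hne2 : v ≠ -u) :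
    (¬ ∃ ε > (0:ℝ), ∀ u' ∈ P, ∀ v' ∈ Q, vnorm u' = 1 → vnorm v' = 1 →
        vnorm (u' - u) < ε → vnorm (v' - v) < ε → u ⬝ᵥ v ≤ u' ⬝ᵥ v') ∧
    (¬ ∃ ε > (0:ℝ), ∀ u' ∈ P, ∀ v' ∈ Q, vnorm u' = 1 → vnorm v' = 1 →
        vnorm (u' - u) < ε → vnorm (v' - v) < ε → u' ⬝ᵥ v' ≤ u ⬝ᵥ v) := by
  obtain ⟨P, rfl⟩ := exists_pointedCone_coe_eq_of_coneOf hP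
  obtain ⟨Q, rfl⟩ := exists_pointedCone_coe_eq_of_coneOf hQ
  have huu := dotProduct_self_eq_one hnu
  have hvv := dotProduct_self_eq_one hnv
  have hσ : u ⬝ᵥ v < 1 := dotProduct_lt_one_of_ne huu hvv hne1
  have hσ' : -(u ⬝ᵥ v) < 1 := by
    simpa using dotProduct_lt_one_of_ne (u := -u) (by simpa using huu) hvv hne2
  obtain ⟨z, ⟨hzP, hzQ⟩, hz⟩ := Submodule.exists_mem_inf_ne_zero_of_finrank_lt_add
    (s := P.convex.lineDirections hu) (t := Q.convex.lineDirections hv) <| by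
      rw [Module.finrank_fin_fun]
      exact hdim.trans_le (add_le_add
        (Submodule.finrank_mono (PointedCone.span_le_lineDirections_of_minimal hu hFu huFu hFumin))
        (Submodule.finrank_mono (PointedCone.span_le_lineDirections_of_minimal hv hFv hvFv hFvmin)))
  obtain ⟨huz, hvz⟩ := dotProduct_eq_zero_of_sub_smul_dotProduct_eq_zero (by nlinarith)
    (P.convex.apply_eq_zero_of_mem_lineDirections hu (f := dotProductBilin ℝ ℝ _) hcrit1
      ((dotProduct_comm _ _).trans hcrit3) hzP)
    (Q.convex.apply_eq_zero_of_mem_lineDirections hv (f := dotProductBilin ℝ ℝ _) hcrit2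
      ((dotProduct_comm _ _).trans hcrit4) hzQ)
  refine ⟨fun ⟨ε, hε, hmin⟩ => ?_, fun ⟨ε, hε, hmax⟩ => ?_⟩
  · obtain ⟨u', hu', v', hv', h₁, h₂, h₃, h₄, hgain⟩ := exists_near_sign_mul_dotProduct_sub_pos
      hnu hnv huz hvz hz hzP hzQ (s := -1) (by norm_num) (by linarith) hε
    linarith [hmin u' hu' v' hv' h₁ h₂ h₃ h₄]
  · obtain ⟨u', hu', v', hv', h₁, h₂, h₃, h₄, hgain⟩ := exists_near_sign_mul_dotProduct_sub_pos
      hnu hnv huz hvz hz hzP hzQ (s := 1) (by norm_num) (by linarith) hε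
    linarith [hmax u' hu' v' hv' h₁ h₂ h₃ h₄]
end
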